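/- arXiv:2106.05620 — 11 statements merged into one kernel-verified Lean document; each statement's English description precedes it below -/
import Mathlib

section
/- Let X be a metric space, c ∈ X, r ≥ 0, Q a nonempty finite set of points of X, and m a natural number with 1 ≤ m ≤ Q.card. For every x with dist(x, c) ≤ r: min over subsets S ⊆ Q with S.card = m of ∑_{q ∈ S} dist(x, q) is at least min over subsets S ⊆ Q with S.card = m of ∑_{q ∈ S} max(dist(c, q) − r, 0). -/
/-- Flexible aggregate (sum) value: the minimum, over all subsets `S ⊆ Q` with
`S.card = m`, of `∑ q ∈ S, f q`. -/
noncomputable def flexMinSum {X : Type*} (Q : Finset X) (m : ℕ)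
    (h : (Q.powersetCard m).Nonempty) (f : X → ℝ) : ℝ :=
  (Q.powersetCard m).inf' h fun S => ∑ q ∈ S, f q

/-- Flexible aggregate (max) value: the minimum, over all subsets `S ⊆ Q` with
`S.card = m`, of `max_{q ∈ S} f q`. -/
noncomputable def flexMinMax {X : Type*} (Q : Finset X) (m : ℕ)
    (h : (Q.powersetCard m).Nonempty) (f : X → ℝ) : ℝ :=
  (Q.powersetCard m).inf' h fun S => sSup (f '' (S : Set X))

/-- The entry FANN distance (sum aggregate), computed from the region distance
`D(e', q) = max (dist c q − r) 0`, lower-bounds the FANN distance of every object `x`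
inside the closed ball of center `c` and radius `r`. -/
theorem entry_gphi_le_fannSum {X : Type*} [MetricSpace X] (c : X) (r : ℝ) (hr : 0 ≤ r)
    (Q : Finset X) (hQ : Q.Nonempty) (m : ℕ) (hm1 : 1 ≤ m) (hm2 : m ≤ Q.card)
    (x : X) (hx : dist x c ≤ r) :
    flexMinSum Q m (Finset.powersetCard_nonempty.mpr hm2) (fun q => max (dist c q - r) 0) ≤
      flexMinSum Q m (Finset.powersetCard_nonempty.mpr hm2) (fun q => dist x q) := by
  unfold flexMinSum
  apply Finset.le_inf'
  intro S hS
  refine le_trans (Finset.inf'_le _ hS) ?_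
  apply Finset.sum_le_sum
  intro q _
  have h1 : dist c q ≤ r + dist x q := by
    have := dist_triangle c x q
    have := dist_comm x c ▸ hx
    linarith [dist_triangle c x q, dist_comm c x ▸ hx]
  exact max_le (by linarith) dist_nonneg
end

section
/- Let X be a metric space, c ∈ X, r ≥ 0, Q a nonempty finite set of points of X, and m a natural number with 1 ≤ m ≤ Q.card. For every x with dist(x, c) ≤ r: min over subsets S ⊆ Q with S.card = m of max_{q ∈ S} dist(x, q) is at least min over subsets S ⊆ Q with S.card = m of max_{q ∈ S} max(dist(c, q) − r, 0). -/
/-- The entry FANN distance (max aggregate), computed from the region distance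
`D(e', q) = max (dist c q − r) 0`, lower-bounds the FANN distance of every object `x`
inside the closed ball of center `c` and radius `r`. -/
theorem entry_gphi_le_fannMax {X : Type*} [MetricSpace X] (c : X) (r : ℝ) (hr : 0 ≤ r)
    (Q : Finset X) (hQ : Q.Nonempty) (m : ℕ) (hm1 : 1 ≤ m) (hm2 : m ≤ Q.card)
    (x : X) (hx : dist x c ≤ r) :
    flexMinMax Q m (Finset.powersetCard_nonempty.mpr hm2) (fun q => max (dist c q - r) 0) ≤
      flexMinMax Q m (Finset.powersetCard_nonempty.mpr hm2) (fun q => dist x q) := by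
  unfold flexMinMax
  refine Finset.le_inf' _ _ fun S hS => (Finset.inf'_le _ hS).trans ?_
  rw [Finset.mem_powersetCard] at hS
  have hSne : (S : Set X).Nonempty := by
    rw [Finset.coe_nonempty, ← Finset.card_pos]; omega
  apply csSup_le (hSne.image _)
  rintro y ⟨q, hq, rfl⟩
  have h1 : max (dist c q - r) 0 ≤ dist x q := by
    have := dist_triangle c x q
    have hcx : dist c x ≤ r := by rwa [dist_comm]
    have := dist_nonneg (x := x) (y := q)
    simp only [max_le_iff]; constructor <;> linarith
  refine h1.trans (le_csSup ?_ ⟨q, hq, rfl⟩)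
  exact (S.finite_toSet.image _).bddAbove
end

section
/- Let X be a metric space, O_r, O_p ∈ X, r ≥ 0, Q a nonempty finite set of points of X, and m a natural number with 1 ≤ m ≤ Q.card. For every x with dist(x, O_r) ≤ r: min over subsets S ⊆ Q with S.card = m of ∑_{q ∈ S} dist(x, q) is at least min over subsets S ⊆ Q with S.card = m of ∑_{q ∈ S} (|dist(O_p, q) − dist(O_p, O_r)| − r). -/
/-- The cheap non-leaf bound `e'.G_φ` (sum aggregate), computed from
`D_G(e', q) = |dist O_p q − dist O_p O_r| − r`, lower-bounds the FANN distance of every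
object `x` inside the closed ball of center `O_r` and radius `r`. -/
theorem entry_Gphi_le_fannSum {X : Type*} [MetricSpace X] (Or Op : X) (r : ℝ) (hr : 0 ≤ r)
    (Q : Finset X) (hQ : Q.Nonempty) (m : ℕ) (hm1 : 1 ≤ m) (hm2 : m ≤ Q.card)
    (x : X) (hx : dist x Or ≤ r) :
    flexMinSum Q m (Finset.powersetCard_nonempty.mpr hm2)
        (fun q => |dist Op q - dist Op Or| - r) ≤
      flexMinSum Q m (Finset.powersetCard_nonempty.mpr hm2) (fun q => dist x q) := by
  unfold flexMinSum
  apply Finset.le_inf'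
  intro S hS
  refine le_trans (Finset.inf'_le _ hS) (Finset.sum_le_sum fun q _ => ?_)
  have h1 : |dist Op q - dist Op Or| ≤ dist Or q := by
    have := abs_dist_sub_le q Or Op
    rw [dist_comm q Op, dist_comm Or Op, dist_comm q Or] at this
    exact this
  have h2 : dist Or q ≤ dist Or x + dist x q := dist_triangle Or x q
  have h3 : dist Or x ≤ r := by rwa [dist_comm]
  linarith
end

section
/- Let X be a metric space, O_r, O_p ∈ X, r ≥ 0, Q a nonempty finite set of points of X, and m a natural number with 1 ≤ m ≤ Q.card. For every x with dist(x, O_r) ≤ r: min over subsets S ⊆ Q with S.card = m of max_{q ∈ S} dist(x, q) is at least min over subsets S ⊆ Q with S.card = m of max_{q ∈ S} (|dist(O_p, q) − dist(O_p, O_r)| − r). -/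
/-- The cheap non-leaf bound `e'.G_φ` (max aggregate), computed from
`D_G(e', q) = |dist O_p q − dist O_p O_r| − r`, lower-bounds the FANN distance of every
object `x` inside the closed ball of center `O_r` and radius `r`. -/
theorem entry_Gphi_le_fannMax {X : Type*} [MetricSpace X] (Or Op : X) (r : ℝ) (hr : 0 ≤ r)
    (Q : Finset X) (hQ : Q.Nonempty) (m : ℕ) (hm1 : 1 ≤ m) (hm2 : m ≤ Q.card)
    (x : X) (hx : dist x Or ≤ r) :
    flexMinMax Q m (Finset.powersetCard_nonempty.mpr hm2)
        (fun q => |dist Op q - dist Op Or| - r) ≤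
      flexMinMax Q m (Finset.powersetCard_nonempty.mpr hm2) (fun q => dist x q) := by
  unfold flexMinMax
  apply Finset.le_inf'
  intro S hS
  refine le_trans (Finset.inf'_le _ hS) ?_
  rw [Finset.mem_powersetCard] at hS
  have hSne : S.Nonempty := Finset.card_pos.mp (hS.2 ▸ hm1)
  rw [← Finset.sup'_eq_csSup_image S hSne, ← Finset.sup'_eq_csSup_image S hSne]
  apply Finset.sup'_mono_fun
  intro q _
  have h1 : |dist Op q - dist Op Or| ≤ dist Or q := by
    have := abs_dist_sub_le q Or Op
    rwa [dist_comm q Op, dist_comm Or Op, dist_comm q Or] at this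
  have h2 : dist Or q ≤ dist x Or + dist x q := by
    rw [dist_comm x Or]; exact dist_triangle Or x q
  linarith
end

section
/- Let X be a metric space, p, O_p ∈ X, Q a nonempty finite set of points of X, and m a natural number with 1 ≤ m ≤ Q.card. Then min over subsets S ⊆ Q with S.card = m of ∑_{q ∈ S} dist(p, q) is at least min over subsets S ⊆ Q with S.card = m of ∑_{q ∈ S} |dist(O_p, q) − dist(O_p, p)|. -/
/-- The cheap leaf-level bound `p.G_φ` (sum aggregate), computed from
`D_G(p, q) = |dist O_p q − dist O_p p|`, lower-bounds the FANN distance of `p`. -/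
theorem leaf_Gphi_le_fannSum {X : Type*} [MetricSpace X] (p Op : X)
    (Q : Finset X) (hQ : Q.Nonempty) (m : ℕ) (hm1 : 1 ≤ m) (hm2 : m ≤ Q.card) :
    flexMinSum Q m (Finset.powersetCard_nonempty.mpr hm2)
        (fun q => |dist Op q - dist Op p|) ≤
      flexMinSum Q m (Finset.powersetCard_nonempty.mpr hm2) (fun q => dist p q) := by
  unfold flexMinSum
  refine Finset.le_inf' _ _ fun S hS => ?_
  refine le_trans (Finset.inf'_le _ hS) (Finset.sum_le_sum fun q hq => ?_)
  calc |dist Op q - dist Op p| = |dist q Op - dist p Op| := by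
        rw [dist_comm Op q, dist_comm Op p]
    _ ≤ dist q p := abs_dist_sub_le q p Op
    _ = dist p q := dist_comm q p
end

section
/- Let X be a metric space, p, O_p ∈ X, Q a nonempty finite set of points of X, and m a natural number with 1 ≤ m ≤ Q.card. Then min over subsets S ⊆ Q with S.card = m of max_{q ∈ S} dist(p, q) is at least min over subsets S ⊆ Q with S.card = m of max_{q ∈ S} |dist(O_p, q) − dist(O_p, p)|. -/
/-- The cheap leaf-level bound `p.G_φ` (max aggregate), computed from
`D_G(p, q) = |dist O_p q − dist O_p p|`, lower-bounds the FANN distance of `p`. -/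
theorem leaf_Gphi_le_fannMax {X : Type*} [MetricSpace X] (p Op : X)
    (Q : Finset X) (hQ : Q.Nonempty) (m : ℕ) (hm1 : 1 ≤ m) (hm2 : m ≤ Q.card) :
    flexMinMax Q m (Finset.powersetCard_nonempty.mpr hm2)
        (fun q => |dist Op q - dist Op p|) ≤
      flexMinMax Q m (Finset.powersetCard_nonempty.mpr hm2) (fun q => dist p q) := by
  unfold flexMinMax
  refine Finset.le_inf' _ _ fun S hS => (Finset.inf'_le _ hS).trans ?_
  rw [Finset.mem_powersetCard] at hS
  have hSne : S.Nonempty := Finset.card_pos.mp (hS.2 ▸ hm1)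
  have hne : ((fun q => |dist Op q - dist Op p|) '' (S : Set X)).Nonempty :=
    (Set.image_nonempty).mpr (by exact_mod_cast hSne)
  apply csSup_le hne
  rintro x ⟨q, hq, rfl⟩
  have h1 : |dist Op q - dist Op p| ≤ dist p q := by
    have := abs_dist_sub_le p q Op
    rw [dist_comm Op q, dist_comm Op p, abs_sub_comm]
    exact this
  refine h1.trans (le_csSup ?_ ⟨q, hq, rfl⟩)
  exact (S.finite_toSet.image _).bddAbove
end

section
/- Let X be a metric space, c ∈ X, r ≥ 0, Q a nonempty finite set of points of X, m a natural number with 1 ≤ m ≤ Q.card, and p* ∈ X a candidate point. If min over subsets S ⊆ Q with S.card = m of ∑_{q ∈ S} max(dist(c, q) − r, 0) is strictly greater than min over subsets S ⊆ Q with S.card = m of ∑_{q ∈ S} dist(p*, q), then for every x with dist(x, c) ≤ r, min over subsets S with S.card = m of ∑_{q ∈ S} dist(x, q) is strictly greater than min over subsets S with S.card = m of ∑_{q ∈ S} dist(p*, q). -/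
/-- No-false-drop (line 8, sum aggregate): if the entry FANN distance `e'.g_φ`
exceeds the candidate FANN distance, then every object inside the region has FANN
distance strictly exceeding that of the candidate `p*`. -/
theorem no_false_drop_gphi_sum {X : Type*} [MetricSpace X] (c : X) (r : ℝ) (hr : 0 ≤ r)
    (Q : Finset X) (hQ : Q.Nonempty) (m : ℕ) (hm1 : 1 ≤ m) (hm2 : m ≤ Q.card) (pstar : X)
    (h : flexMinSum Q m (Finset.powersetCard_nonempty.mpr hm2) (fun q => dist pstar q) <
      flexMinSum Q m (Finset.powersetCard_nonempty.mpr hm2) (fun q => max (dist c q - r) 0)) :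
    ∀ x : X, dist x c ≤ r →
      flexMinSum Q m (Finset.powersetCard_nonempty.mpr hm2) (fun q => dist pstar q) <
        flexMinSum Q m (Finset.powersetCard_nonempty.mpr hm2) (fun q => dist x q) := by
  intro x hx
  refine lt_of_lt_of_le h ?_
  apply Finset.le_inf'
  intro S hS
  refine le_trans (Finset.inf'_le _ hS) ?_
  apply Finset.sum_le_sum
  intro q hq
  have h1 := dist_triangle c x q
  rw [dist_comm c x] at h1
  exact max_le (by linarith) dist_nonneg
end

section
/- Let X be a metric space, c ∈ X, r ≥ 0, Q a nonempty finite set of points of X, m a natural number with 1 ≤ m ≤ Q.card, and p* ∈ X a candidate point. If min over subsets S ⊆ Q with S.card = m of max_{q ∈ S} max(dist(c, q) − r, 0) is strictly greater than min over subsets S ⊆ Q with S.card = m of max_{q ∈ S} dist(p*, q), then for every x with dist(x, c) ≤ r, min over subsets S with S.card = m of max_{q ∈ S} dist(x, q) is strictly greater than min over subsets S with S.card = m of max_{q ∈ S} dist(p*, q). -/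
theorem flexMinMax_mono {X : Type*} (Q : Finset X) (m : ℕ) (hm1 : 1 ≤ m)
    (h : (Q.powersetCard m).Nonempty) (f g : X → ℝ) (hfg : ∀ q ∈ Q, f q ≤ g q) :
    flexMinMax Q m h f ≤ flexMinMax Q m h g := by
  unfold flexMinMax
  apply Finset.le_inf'
  intro S hS
  rw [Finset.mem_powersetCard] at hS
  have hSne : S.Nonempty := Finset.card_pos.mp (hS.2 ▸ hm1)
  refine le_trans (Finset.inf'_le _ (Finset.mem_powersetCard.mpr hS)) ?_
  rw [← Finset.sup'_eq_csSup_image S hSne f, ← Finset.sup'_eq_csSup_image S hSne g]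
  exact Finset.sup'_mono_fun fun q hq => hfg q (hS.1 hq)

/-- No-false-drop (line 8, max aggregate): if the entry FANN distance `e'.g_φ`
exceeds the candidate FANN distance, then every object inside the region has FANN
distance strictly exceeding that of the candidate `p*`. -/
theorem no_false_drop_gphi_max {X : Type*} [MetricSpace X] (c : X) (r : ℝ) (hr : 0 ≤ r)
    (Q : Finset X) (hQ : Q.Nonempty) (m : ℕ) (hm1 : 1 ≤ m) (hm2 : m ≤ Q.card) (pstar : X)
    (h : flexMinMax Q m (Finset.powersetCard_nonempty.mpr hm2) (fun q => dist pstar q) <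
      flexMinMax Q m (Finset.powersetCard_nonempty.mpr hm2) (fun q => max (dist c q - r) 0)) :
    ∀ x : X, dist x c ≤ r →
      flexMinMax Q m (Finset.powersetCard_nonempty.mpr hm2) (fun q => dist pstar q) <
        flexMinMax Q m (Finset.powersetCard_nonempty.mpr hm2) (fun q => dist x q) := by
  intro x hx
  refine lt_of_lt_of_le h ?_
  apply flexMinMax_mono Q m hm1 _ _ _
  intro q _
  have := dist_triangle c x q
  have h2 : dist c q - r ≤ dist x q := by
    rw [dist_comm x c] at hx; linarith [dist_comm c x ▸ this]
  exact max_le h2 dist_nonneg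
end

section
/- Let X be a metric space, O_r, O_p ∈ X, r ≥ 0, Q a nonempty finite set of points of X, m a natural number with 1 ≤ m ≤ Q.card, and p* ∈ X a candidate point. If min over subsets S ⊆ Q with S.card = m of ∑_{q ∈ S} (|dist(O_p, q) − dist(O_p, O_r)| − r) is strictly greater than min over subsets S with S.card = m of ∑_{q ∈ S} dist(p*, q), then for every x with dist(x, O_r) ≤ r, min over subsets S with S.card = m of ∑_{q ∈ S} dist(x, q) is strictly greater than min over subsets S with S.card = m of ∑_{q ∈ S} dist(p*, q). -/
/-- No-false-drop (line 7, sum aggregate): if the cheap bound `e'.G_φ` exceeds the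
candidate FANN distance, then every object inside the region has FANN distance strictly
exceeding that of the candidate `p*`. -/
theorem no_false_drop_Gphi_sum {X : Type*} [MetricSpace X] (Or Op : X) (r : ℝ) (hr : 0 ≤ r)
    (Q : Finset X) (hQ : Q.Nonempty) (m : ℕ) (hm1 : 1 ≤ m) (hm2 : m ≤ Q.card) (pstar : X)
    (h : flexMinSum Q m (Finset.powersetCard_nonempty.mpr hm2) (fun q => dist pstar q) <
      flexMinSum Q m (Finset.powersetCard_nonempty.mpr hm2)
        (fun q => |dist Op q - dist Op Or| - r)) :
    ∀ x : X, dist x Or ≤ r →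
      flexMinSum Q m (Finset.powersetCard_nonempty.mpr hm2) (fun q => dist pstar q) <
        flexMinSum Q m (Finset.powersetCard_nonempty.mpr hm2) (fun q => dist x q) := by
  intro x hx
  refine lt_of_lt_of_le h ?_
  unfold flexMinSum
  refine Finset.le_inf' _ _ fun S hS => ?_
  refine le_trans (Finset.inf'_le _ hS) (Finset.sum_le_sum fun q _ => ?_)
  have h1 : |dist Op q - dist Op Or| ≤ dist Or q := by
    have := abs_dist_sub_le q Or Op
    rw [dist_comm Op q, dist_comm Op Or, dist_comm Or q]
    exact this
  have h2 : dist Or q ≤ dist x q + dist x Or := by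
    have := dist_triangle q x Or
    rw [dist_comm Or q, dist_comm x q]
    exact this
  linarith
end

section
/- Let X be a metric space, p, O_p ∈ X, Q a nonempty finite set of points of X, m a natural number with 1 ≤ m ≤ Q.card, and p* ∈ X a candidate point. If min over subsets S ⊆ Q with S.card = m of ∑_{q ∈ S} |dist(O_p, q) − dist(O_p, p)| is strictly greater than min over subsets S with S.card = m of ∑_{q ∈ S} dist(p*, q), then min over subsets S with S.card = m of ∑_{q ∈ S} dist(p, q) is strictly greater than min over subsets S with S.card = m of ∑_{q ∈ S} dist(p*, q). -/
/-- No-false-drop (line 13, sum aggregate): if the cheap leaf bound `p.G_φ` exceeds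
the candidate FANN distance, then the true FANN distance of `p` also does. -/
theorem no_false_drop_leaf_sum {X : Type*} [MetricSpace X] (p Op : X)
    (Q : Finset X) (hQ : Q.Nonempty) (m : ℕ) (hm1 : 1 ≤ m) (hm2 : m ≤ Q.card) (pstar : X)
    (h : flexMinSum Q m (Finset.powersetCard_nonempty.mpr hm2) (fun q => dist pstar q) <
      flexMinSum Q m (Finset.powersetCard_nonempty.mpr hm2)
        (fun q => |dist Op q - dist Op p|)) :
    flexMinSum Q m (Finset.powersetCard_nonempty.mpr hm2) (fun q => dist pstar q) <
      flexMinSum Q m (Finset.powersetCard_nonempty.mpr hm2) (fun q => dist p q) := by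
  refine lt_of_lt_of_le h ?_
  unfold flexMinSum
  apply Finset.le_inf'
  intro S hS
  refine Finset.inf'_le_of_le _ hS ?_
  apply Finset.sum_le_sum
  intro q _
  simpa [dist_comm] using abs_dist_sub_le q p Op
end

section
/- Let X be a metric space, p, O_p ∈ X, Q a nonempty finite set of points of X, m a natural number with 1 ≤ m ≤ Q.card, and p* ∈ X a candidate point. If min over subsets S ⊆ Q with S.card = m of max_{q ∈ S} |dist(O_p, q) − dist(O_p, p)| is strictly greater than min over subsets S with S.card = m of max_{q ∈ S} dist(p*, q), then min over subsets S with S.card = m of max_{q ∈ S} dist(p, q) is strictly greater than min over subsets S with S.card = m of max_{q ∈ S} dist(p*, q). -/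
/-- No-false-drop (line 13, max aggregate): if the cheap leaf bound `p.G_φ` exceeds
the candidate FANN distance, then the true FANN distance of `p` also does. -/
theorem no_false_drop_leaf_max {X : Type*} [MetricSpace X] (p Op : X)
    (Q : Finset X) (hQ : Q.Nonempty) (m : ℕ) (hm1 : 1 ≤ m) (hm2 : m ≤ Q.card) (pstar : X)
    (h : flexMinMax Q m (Finset.powersetCard_nonempty.mpr hm2) (fun q => dist pstar q) <
      flexMinMax Q m (Finset.powersetCard_nonempty.mpr hm2)
        (fun q => |dist Op q - dist Op p|)) :
    flexMinMax Q m (Finset.powersetCard_nonempty.mpr hm2) (fun q => dist pstar q) <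
      flexMinMax Q m (Finset.powersetCard_nonempty.mpr hm2) (fun q => dist p q) := by
  refine lt_of_lt_of_le h ?_
  unfold flexMinMax
  apply Finset.le_inf'
  intro S hS
  refine le_trans (Finset.inf'_le _ hS) ?_
  have hSmem := Finset.mem_powersetCard.mp hS
  have hSne : S.Nonempty := Finset.card_pos.mp (hSmem.2 ▸ hm1)
  rw [← Finset.sup'_eq_csSup_image S hSne, ← Finset.sup'_eq_csSup_image S hSne]
  apply Finset.sup'_mono_fun
  intro q _
  simpa [dist_comm] using abs_dist_sub_le q p Op
end
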